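/- arXiv:2211.16842 — 2 statements merged into one kernel-verified Lean document; each statement's English description precedes it below -/
import Mathlib

section
/- Let M = 3^(15/2)/(4·7^(7/2)). There exists a (5,1)-admissible tuple y₁,…,y₅ of complex numbers with P_{5,1}(y) = ∏_{1≤i<j≤5} |1 − yᵢ/yⱼ| = 16·M; hence the upper bound 16·M for P_{5,1} is best possible. -/
/-!
The extremal tuple is `(-2, 1 + 3√3 i, 1 - 3√3 i, -2√7, 2√7)`: the last four entries lie on the
circle of radius `√28`. Squaring turns `P` into `∏ |yⱼ - yᵢ|² / |yⱼ|²`, a product of numbers in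
`ℚ(√7)` whose irrational factors come in conjugate pairs, `(32 - 8√7)(32 + 8√7) = 576` and
`(56 + 4√7)(56 - 4√7) = 3024`, so that `P² = 16 · 3¹⁵ / 7⁷ = (16 M)²`.
-/

open Complex Finset

/-- A tuple `y₁, …, yₙ` of nonzero complex numbers is `(n,1)`-admissible if the absolute
values are nondecreasing, exactly two of the `yᵢ` are non-real, and these two are complex
conjugates of each other (all remaining entries being real). -/
def IsAdmissible (n : ℕ) (y : Fin n → ℂ) : Prop :=
  (∀ k, y k ≠ 0) ∧
  (∀ k l, k ≤ l → ‖y k‖ ≤ ‖y l‖) ∧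
  ∃ i j : Fin n, i ≠ j ∧ (y i).im ≠ 0 ∧ (y j).im ≠ 0 ∧
    y j = (starRingEnd ℂ) (y i) ∧ ∀ k, k ≠ i → k ≠ j → (y k).im = 0

/-- `P n y = ∏_{1 ≤ i < j ≤ n} |1 - yᵢ/yⱼ|`. -/
noncomputable def P (n : ℕ) (y : Fin n → ℂ) : ℝ :=
  ∏ p ∈ Finset.univ.filter (fun p : Fin n × Fin n => p.1 < p.2),
    ‖1 - y p.1 / y p.2‖

lemma P_nonneg (n : ℕ) (y : Fin n → ℂ) : 0 ≤ P n y :=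
  prod_nonneg fun _ _ => norm_nonneg _

lemma P_sq_eq_prod_normSq {n : ℕ} {y : Fin n → ℂ} (hy : ∀ k, y k ≠ 0) :
    P n y ^ 2 = ∏ p ∈ univ.filter (fun p : Fin n × Fin n => p.1 < p.2),
      normSq (y p.2 - y p.1) / normSq (y p.2) := by
  rw [P, ← prod_pow]
  refine prod_congr rfl fun p _ => ?_
  rw [Complex.sq_norm, one_sub_div (hy p.2), map_div₀]

lemma prod_filter_fst_lt_snd_fin_five {M : Type*} [CommMonoid M] (f : Fin 5 × Fin 5 → M) :
    ∏ p ∈ univ.filter (fun p : Fin 5 × Fin 5 => p.1 < p.2), f p =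
      f (0, 1) * f (0, 2) * f (0, 3) * f (0, 4) * f (1, 2) * f (1, 3) * f (1, 4) *
        f (2, 3) * f (2, 4) * f (3, 4) := by
  rw [prod_filter, Fintype.prod_prod_type]
  simp [Fin.prod_univ_five]
  ac_rfl

noncomputable def extremalTuple : Fin 5 → ℂ :=
  ![⟨-2, 0⟩, ⟨1, 3 * √3⟩, ⟨1, -(3 * √3)⟩, ⟨-(2 * √7), 0⟩, ⟨2 * √7, 0⟩]

lemma normSq_extremalTuple (k : Fin 5) :
    normSq (extremalTuple k) = if k = 0 then 4 else 28 := by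
  have h3 : √3 ^ 2 = 3 := Real.sq_sqrt (by norm_num)
  have h7 : √7 ^ 2 = 7 := Real.sq_sqrt (by norm_num)
  fin_cases k <;> simp [extremalTuple, normSq_mk] <;> nlinarith

lemma isAdmissible_extremalTuple : IsAdmissible 5 extremalTuple := by
  refine ⟨fun k => ?_, fun k l hkl => ?_, 1, 2, by decide, ?_, ?_, ?_, fun k hk1 hk2 => ?_⟩
  · rw [ne_eq, ← normSq_eq_zero, normSq_extremalTuple]
    split_ifs <;> norm_num
  · rw [norm_def, norm_def]
    refine Real.sqrt_le_sqrt ?_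
    rw [normSq_extremalTuple, normSq_extremalTuple]
    split_ifs with hk hl hl
    · rfl
    · norm_num
    · subst hl; exact absurd (Fin.le_zero_iff.mp hkl) hk
    · rfl
  · simp [extremalTuple]
  · simp [extremalTuple]
  · simp [extremalTuple, Complex.ext_iff]
  · fin_cases k <;> simp_all [extremalTuple]

lemma P_extremalTuple_sq : P 5 extremalTuple ^ 2 = 16 * 3 ^ 15 / 7 ^ 7 := by
  have h3 : √3 ^ 2 = 3 := Real.sq_sqrt (by norm_num)
  have h7 : √7 ^ 2 = 7 := Real.sq_sqrt (by norm_num)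
  set y := extremalTuple
  obtain ⟨h01, h02, h12, h34, h0, h1, h2⟩ :
      normSq (y 1 - y 0) = 36 ∧ normSq (y 2 - y 0) = 36 ∧ normSq (y 2 - y 1) = 108 ∧
      normSq (y 4 - y 3) = 112 ∧ normSq (y 3 - y 0) * normSq (y 4 - y 0) = 576 ∧
      normSq (y 3 - y 1) * normSq (y 4 - y 1) = 3024 ∧
      normSq (y 3 - y 2) * normSq (y 4 - y 2) = 3024 := by
    refine ⟨?_, ?_, ?_, ?_, ?_, ?_, ?_⟩ <;> simp [y, extremalTuple, normSq_apply] <;> nlinarith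
  rw [P_sq_eq_prod_normSq isAdmissible_extremalTuple.1, prod_filter_fst_lt_snd_fin_five]
  simp only [normSq_extremalTuple, Fin.reduceEq, if_false]
  calc _ = normSq (y 1 - y 0) * normSq (y 2 - y 0) * normSq (y 2 - y 1) * normSq (y 4 - y 3) *
        (normSq (y 3 - y 0) * normSq (y 4 - y 0)) * (normSq (y 3 - y 1) * normSq (y 4 - y 1)) *
        (normSq (y 3 - y 2) * normSq (y 4 - y 2)) / 28 ^ 10 := by ring
    _ = 16 * 3 ^ 15 / 7 ^ 7 := by rw [h01, h02, h12, h34, h0, h1, h2]; norm_num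

lemma sixteen_mul_M_sq :
    (16 * ((3 : ℝ) ^ ((15 : ℝ) / 2) / (4 * (7 : ℝ) ^ ((7 : ℝ) / 2)))) ^ 2 = 16 * 3 ^ 15 / 7 ^ 7 := by
  have hpow : ∀ a x : ℝ, 0 ≤ a → (a ^ (x / 2)) ^ 2 = a ^ x := fun a x ha => by
    rw [← Real.rpow_natCast, ← Real.rpow_mul ha]; norm_num
  rw [mul_pow, div_pow, mul_pow, hpow 3 15 (by norm_num), hpow 7 7 (by norm_num)]
  norm_num

theorem P51_eq_sixteenM :
    ∃ y : Fin 5 → ℂ, IsAdmissible 5 y ∧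
      P 5 y = 16 * ((3 : ℝ) ^ ((15 : ℝ) / 2) / (4 * (7 : ℝ) ^ ((7 : ℝ) / 2))) := by
  refine ⟨extremalTuple, isAdmissible_extremalTuple, ?_⟩
  rw [← sq_eq_sq₀ (P_nonneg _ _) (by positivity), P_extremalTuple_sq, sixteen_mul_M_sq]
end

section
/- Let n ≥ 2, let ε = (ε₁,…,ε_{n−1}) ∈ {−1,+1}^{n−1}, and define the configuration Q_{n−1,ε}(x₁,…,x_{n−1}) = ∏_{1 ≤ i ≤ j ≤ n−1} (1 − (∏_{k=i}^{j} ε_k)(∏_{k=i}^{j} x_k)). Then for all (x₁,…,x_{n−1}) ∈ [0,1]^{n−1} one has Q_{n−1,ε}(x) ≤ Q_{n−1,ε₋}(x), where ε₋ = (−1,−1,…,−1); explicitly, ∏_{1≤i≤j≤n−1} (1 − (∏_{k=i}^j ε_k)(∏_{k=i}^j x_k)) ≤ ∏_{1≤i≤j≤n−1} (1 − (−1)^{j−i+1} ∏_{k=i}^j x_k). -/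
/-!
Write `z k = ε k * x k`. Each factor is `1 - ∏_{k=i}^j z_k`, and the right-hand side is the same
product at `-|z|`. For `|z_k| < 1`, expanding `log (1 - w) = -∑ w ^ n / n` gives
`log Q(z) = -∑ₙ S(z ^ n) / n` with `S(z) = ∑_{i ≤ j} ∏_{k=i}^j z_k`, so it suffices that
`S(-|z|) ≤ S(z)` whenever `|z_k| ≤ 1` (for even `n` the two terms agree). `S` is affine in each
`|z_k|`, which reduces this to `z_k ∈ {-1, 0, 1}`. There `2 S(z) + m + 1` is a sum of squares of
the integers `V_{j+1} = 1 + z_j V_j`, `V_0 = 1`, with weights depending only on `|z|`, and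
`V_j(-|z|) ∈ {0, 1}` is the residue of `V_j(z)` mod 2. The case `|z_k| = 1` follows by continuity.
-/

open Finset

/-- The configuration `Q_{n−1,ε}(x) = ∏_{1 ≤ i ≤ j ≤ n−1} (1 − (∏_{k=i}^j ε_k)(∏_{k=i}^j x_k))`
(indices written here zero-based). -/
noncomputable def Qconf (m : ℕ) (ε x : Fin m → ℝ) : ℝ :=
  ∏ p ∈ Finset.univ.filter (fun p : Fin m × Fin m => p.1 ≤ p.2),
    (1 - (∏ k ∈ Finset.Icc p.1 p.2, ε k) * ∏ k ∈ Finset.Icc p.1 p.2, x k)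

open Function

theorem Finset.prod_update_eq_affine {ι R : Type*} [CommRing R] [DecidableEq ι] (s : Finset ι)
    (y : ι → R) (j : ι) (t : R) :
    ∏ k ∈ s, update y j t k =
      (1 - t) * ∏ k ∈ s, update y j 0 k + t * ∏ k ∈ s, update y j 1 k := by
  by_cases hj : j ∈ s
  · simp only [prod_update_of_mem hj]; ring
  · simp only [prod_update_of_notMem hj]; ring

theorem nonneg_of_affine_of_nonneg_on_vertices {ι : Type*} [DecidableEq ι] {f : (ι → ℝ) → ℝ}
    (hf : ∀ y j t, f (update y j t) = (1 - t) * f (update y j 0) + t * f (update y j 1))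
    (hvert : ∀ y : ι → ℝ, (∀ k, y k = 0 ∨ y k = 1) → 0 ≤ f y) (s : Finset ι) :
    ∀ y : ι → ℝ, (∀ k, y k ∈ Set.Icc 0 1) → (∀ k ∉ s, y k = 0 ∨ y k = 1) → 0 ≤ f y := by
  induction s using Finset.induction_on with
  | empty => exact fun y _ hy => hvert y fun k => hy k (notMem_empty k)
  | insert j s hj ih =>
    intro y hy hys
    have hupd : ∀ t : ℝ, (t = 0 ∨ t = 1) → 0 ≤ f (update y j t) := by
      intro t ht
      refine ih _ (fun k => ?_) (fun k hk => ?_) <;> rcases eq_or_ne k j with rfl | hkj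
      · rcases ht with rfl | rfl <;> simp
      · simpa [hkj] using hy k
      · simpa using ht
      · simpa [hkj] using hys k (by simp [hkj, hk])
    have h := hf y j (y j)
    rw [update_eq_self] at h
    rw [h]
    exact add_nonneg (mul_nonneg (sub_nonneg.2 (hy j).2) (hupd 0 (Or.inl rfl)))
      (mul_nonneg (hy j).1 (hupd 1 (Or.inr rfl)))

section IntervalProducts

variable {R : Type*} [CommRing R]

def intervalProdSum (m : ℕ) (z : ℕ → R) : R :=
  ∑ j ∈ range m, ∑ i ∈ range (j + 1), ∏ k ∈ Icc i j, z k

def intervalFactorProd (m : ℕ) (z : ℕ → R) : R :=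
  ∏ j ∈ range m, ∏ i ∈ range (j + 1), (1 - ∏ k ∈ Icc i j, z k)

/-- `suffixProdSum z j = ∑ i ∈ range (j + 1), ∏ k ∈ Ico i j, z k`. -/
def suffixProdSum (z : ℕ → R) : ℕ → R
  | 0 => 1
  | k + 1 => 1 + z k * suffixProdSum z k

theorem sum_prod_Icc_eq_mul_suffixProdSum (z : ℕ → R) (j : ℕ) :
    ∑ i ∈ range (j + 1), ∏ k ∈ Icc i j, z k = z j * suffixProdSum z j := by
  induction j with
  | zero => simp [suffixProdSum]
  | succ j ih =>
    have hsplit : ∀ i ∈ range (j + 1), ∏ k ∈ Icc i (j + 1), z k = (∏ k ∈ Icc i j, z k) * z (j + 1) :=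
      fun i hi => prod_Icc_succ_top (by simp at hi; omega) z
    rw [sum_range_succ, sum_congr rfl hsplit, ← sum_mul, ih, Icc_self, prod_singleton,
      suffixProdSum]
    ring

theorem intervalProdSum_succ (m : ℕ) (z : ℕ → R) :
    intervalProdSum (m + 1) z = intervalProdSum m z + z m * suffixProdSum z m := by
  rw [intervalProdSum, sum_range_succ, sum_prod_Icc_eq_mul_suffixProdSum, intervalProdSum]

theorem two_mul_intervalProdSum_add (m : ℕ) (z : ℕ → R) :
    2 * intervalProdSum m z + (m + 1) =
      suffixProdSum z m ^ 2 + ∑ k ∈ range m, (1 - z k ^ 2) * suffixProdSum z k ^ 2 := by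
  induction m with
  | zero => simp [intervalProdSum, suffixProdSum]
  | succ m ih =>
    rw [intervalProdSum_succ, sum_range_succ, suffixProdSum]
    push_cast
    linear_combination ih

theorem intervalProdSum_mul_update (m : ℕ) (a y : ℕ → R) (j : ℕ) (t : R) :
    intervalProdSum m (a * update y j t) =
      (1 - t) * intervalProdSum m (a * update y j 0) +
        t * intervalProdSum m (a * update y j 1) := by
  simp only [intervalProdSum, mul_sum, ← sum_add_distrib, Pi.mul_apply, prod_mul_distrib]
  refine sum_congr rfl fun _ _ => sum_congr rfl fun _ _ => ?_
  rw [prod_update_eq_affine _ y j t]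
  ring

theorem intervalProdSum_congr {m : ℕ} {z w : ℕ → R} (h : ∀ k < m, z k = w k) :
    intervalProdSum m z = intervalProdSum m w := by
  refine sum_congr rfl fun j hj => sum_congr rfl fun i _ => prod_congr rfl fun k hk => h k ?_
  simp only [mem_range, mem_Icc] at hj hk
  omega

end IntervalProducts

section SignChoices

variable {z : ℕ → ℝ}

theorem exists_int_suffixProdSum (hz : ∀ k, z k = -1 ∨ z k = 0 ∨ z k = 1) (k : ℕ) :
    ∃ n : ℤ, suffixProdSum z k = n ∧ suffixProdSum (-|z|) k = ((n % 2 : ℤ) : ℝ) := by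
  induction k with
  | zero => exact ⟨1, by simp [suffixProdSum]⟩
  | succ k ih =>
    obtain ⟨n, hn, hn'⟩ := ih
    simp only [suffixProdSum, Pi.neg_apply, Pi.abs_apply, hn, hn']
    rcases hz k with h | h | h <;> simp only [h]
    · refine ⟨1 - n, by push_cast; ring, ?_⟩
      rw [show (1 - n) % 2 = 1 - n % 2 by omega]
      push_cast; ring
    · exact ⟨1, by simp⟩
    · refine ⟨1 + n, by push_cast; ring, ?_⟩
      rw [show (1 + n) % 2 = 1 - n % 2 by omega]
      push_cast; ring

theorem sq_suffixProdSum_neg_abs_le (hz : ∀ k, z k = -1 ∨ z k = 0 ∨ z k = 1) (k : ℕ) :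
    suffixProdSum (-|z|) k ^ 2 ≤ suffixProdSum z k ^ 2 := by
  obtain ⟨n, hn, hn'⟩ := exists_int_suffixProdSum hz k
  rw [hn, hn']
  exact_mod_cast show (n % 2) ^ 2 ≤ n ^ 2 by
    rcases Int.emod_two_eq_zero_or_one n with h | h <;> rw [h]
    · positivity
    · nlinarith [Int.one_le_abs (show n ≠ 0 by omega), sq_abs n]

theorem intervalProdSum_neg_abs_le_of_mem (m : ℕ) (hz : ∀ k, z k = -1 ∨ z k = 0 ∨ z k = 1) :
    intervalProdSum m (-|z|) ≤ intervalProdSum m z := by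
  have hsum := two_mul_intervalProdSum_add m z
  have hsum_neg := two_mul_intervalProdSum_add m (-|z|)
  simp only [Pi.neg_apply, Pi.abs_apply, neg_sq, sq_abs] at hsum_neg
  have hweights : ∑ k ∈ range m, (1 - z k ^ 2) * suffixProdSum (-|z|) k ^ 2 ≤
      ∑ k ∈ range m, (1 - z k ^ 2) * suffixProdSum z k ^ 2 := by
    refine sum_le_sum fun k _ => mul_le_mul_of_nonneg_left (sq_suffixProdSum_neg_abs_le hz k) ?_
    rcases hz k with h | h | h <;> simp [h]
  linarith [sq_suffixProdSum_neg_abs_le hz m]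

theorem intervalProdSum_neg_abs_le (m : ℕ) (hz : ∀ k, |z k| ≤ 1) :
    intervalProdSum m (-|z|) ≤ intervalProdSum m z := by
  classical
  set ε : ℕ → ℝ := fun k => if 0 ≤ z k then 1 else -1
  have hε : ∀ k, ε k = -1 ∨ ε k = 1 := fun k => by unfold ε; split_ifs <;> simp
  -- `y ↦ S(ε * y) - S(-y)` is affine in each coordinate, so the vertices of the cube suffice.
  set f : (ℕ → ℝ) → ℝ := fun y => intervalProdSum m (ε * y) - intervalProdSum m (-1 * y)
  have hf : ∀ y j t, f (update y j t) = (1 - t) * f (update y j 0) + t * f (update y j 1) := by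
    intro y j t
    simp only [f, intervalProdSum_mul_update m _ y j t]
    ring
  have hvert : ∀ y : ℕ → ℝ, (∀ k, y k = 0 ∨ y k = 1) → 0 ≤ f y := by
    intro y hy
    have habs : -1 * y = -|ε * y| := by
      funext k
      rcases hε k with h | h <;> rcases hy k with h' | h' <;> simp [h, h']
    refine sub_nonneg.2 (habs ▸ intervalProdSum_neg_abs_le_of_mem m fun k => ?_)
    rcases hε k with h | h <;> rcases hy k with h' | h' <;> simp [h, h']
  set y : ℕ → ℝ := fun k => if k < m then |z k| else 0
  have hy := nonneg_of_affine_of_nonneg_on_vertices hf hvert (range m) y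
    (fun k => by unfold y; split_ifs <;> simp [hz k])
    (fun k hk => by simp only [mem_range] at hk; simp [y, hk])
  have hεy : ∀ k < m, (ε * y) k = z k := fun k hk => by
    simp only [Pi.mul_apply, ε, y, if_pos hk]
    split_ifs with h
    · simp [abs_of_nonneg h]
    · simp [abs_of_neg (not_le.1 h)]
  have hny : ∀ k < m, (-1 * y) k = (-|z|) k := fun k hk => by simp [y, hk]
  simp only [f, intervalProdSum_congr hεy, intervalProdSum_congr hny] at hy
  linarith

theorem intervalProdSum_pow_neg_abs_le (m : ℕ) (hz : ∀ k, |z k| ≤ 1) (n : ℕ) :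
    intervalProdSum m ((-|z|) ^ n) ≤ intervalProdSum m (z ^ n) := by
  rcases n.even_or_odd with hn | hn
  · have : (-|z|) ^ n = z ^ n := by
      funext k
      simp only [Pi.pow_apply, Pi.neg_apply, Pi.abs_apply]
      rw [hn.neg_pow, hn.pow_abs]
    rw [this]
  · have : (-|z|) ^ n = -|z ^ n| := by
      funext k
      simp only [Pi.pow_apply, Pi.neg_apply, Pi.abs_apply]
      rw [hn.neg_pow, pow_abs]
    rw [this]
    exact intervalProdSum_neg_abs_le m fun k => by
      simpa [abs_pow] using pow_le_one₀ (abs_nonneg _) (hz k)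

end SignChoices

section Analytic

variable {z : ℕ → ℝ}

theorem abs_prod_Icc_lt_one (hz : ∀ k, |z k| < 1) {i j : ℕ} (hij : i ≤ j) :
    |∏ k ∈ Icc i j, z k| < 1 := by
  rw [abs_prod, ← mul_prod_erase _ _ (mem_Icc.2 ⟨hij, le_rfl⟩)]
  have hrest : ∏ k ∈ (Icc i j).erase j, |z k| ≤ 1 :=
    prod_le_one (fun k _ => abs_nonneg _) fun k _ => (hz k).le
  exact (mul_le_of_le_one_right (abs_nonneg _) hrest).trans_lt (hz j)

theorem intervalFactorProd_pos (m : ℕ) (hz : ∀ k, |z k| < 1) : 0 < intervalFactorProd m z :=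
  prod_pos fun j _ => prod_pos fun i hi => sub_pos.2 <|
    (le_abs_self _).trans_lt (abs_prod_Icc_lt_one hz (by simp at hi; omega))

/-- Sum over all factors of `log (1 - w) = -∑ w ^ (n + 1) / (n + 1)`. -/
theorem hasSum_log_intervalFactorProd (m : ℕ) (hz : ∀ k, |z k| < 1) :
    HasSum (fun n : ℕ => -(intervalProdSum m (z ^ (n + 1)) / (n + 1)))
      (Real.log (intervalFactorProd m z)) := by
  have hfac : ∀ j ∈ range m, ∀ i ∈ range (j + 1), |∏ k ∈ Icc i j, z k| < 1 :=
    fun j _ i hi => abs_prod_Icc_lt_one hz (by simp at hi; omega)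
  have hpos : ∀ j ∈ range m, ∀ i ∈ range (j + 1), 0 < 1 - ∏ k ∈ Icc i j, z k :=
    fun j hj i hi => sub_pos.2 ((le_abs_self _).trans_lt (hfac j hj i hi))
  have hlog : Real.log (intervalFactorProd m z) =
      ∑ j ∈ range m, ∑ i ∈ range (j + 1), Real.log (1 - ∏ k ∈ Icc i j, z k) := by
    rw [intervalFactorProd, Real.log_prod fun j hj => (prod_pos (hpos j hj)).ne']
    exact sum_congr rfl fun j hj => Real.log_prod fun i hi => (hpos j hj i hi).ne'
  have hterms : (fun n : ℕ => -(intervalProdSum m (z ^ (n + 1)) / (n + 1))) =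
      fun n : ℕ => ∑ j ∈ range m, ∑ i ∈ range (j + 1),
        -((∏ k ∈ Icc i j, z k) ^ (n + 1) / (n + 1)) := by
    funext n
    simp only [intervalProdSum, Pi.pow_apply, prod_pow, sum_div, ← sum_neg_distrib]
  rw [hterms, hlog]
  refine hasSum_sum fun j hj => hasSum_sum fun i hi => ?_
  simpa using (Real.hasSum_pow_div_log_of_abs_lt_one (hfac j hj i hi)).neg

theorem intervalFactorProd_le_neg_abs_of_abs_lt_one (m : ℕ) (hz : ∀ k, |z k| < 1) :
    intervalFactorProd m z ≤ intervalFactorProd m (-|z|) := by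
  have hz' : ∀ k, |(-|z|) k| < 1 := by simpa using hz
  rw [← Real.log_le_log_iff (intervalFactorProd_pos m hz) (intervalFactorProd_pos m hz')]
  refine hasSum_le (fun n => ?_) (hasSum_log_intervalFactorProd m hz)
    (hasSum_log_intervalFactorProd m hz')
  exact neg_le_neg <| div_le_div_of_nonneg_right
    (intervalProdSum_pow_neg_abs_le m (fun k => (hz k).le) _) (by positivity)

theorem intervalFactorProd_le_neg_abs (m : ℕ) (hz : ∀ k, |z k| ≤ 1) :
    intervalFactorProd m z ≤ intervalFactorProd m (-|z|) := by
  have hcont : ∀ w : ℕ → ℝ, Continuous fun c : ℝ => intervalFactorProd m (c • w) := by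
    intro w
    simp only [intervalFactorProd, Pi.smul_apply, smul_eq_mul]
    fun_prop
  have hscaled : ∀ c ∈ Set.Ico (0 : ℝ) 1,
      intervalFactorProd m (c • z) ≤ intervalFactorProd m (c • -|z|) := by
    intro c hc
    have hcz : c • -|z| = -|c • z| := by
      funext k; simp [abs_mul, abs_of_nonneg hc.1]
    rw [hcz]
    refine intervalFactorProd_le_neg_abs_of_abs_lt_one m fun k => ?_
    simp only [Pi.smul_apply, smul_eq_mul, abs_mul, abs_of_nonneg hc.1]
    linarith [mul_le_mul_of_nonneg_left (hz k) hc.1, hc.2]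
  have h1 : (1 : ℝ) ∈ closure (Set.Ico 0 1) := by simp [closure_Ico zero_ne_one]
  simpa using le_on_closure hscaled (hcont z).continuousOn (hcont _).continuousOn h1

end Analytic

section FinTransfer

theorem prod_filter_le_eq_prod_range {M : Type*} [CommMonoid M] (m : ℕ) (g : ℕ → ℕ → M) :
    ∏ p ∈ univ.filter (fun p : Fin m × Fin m => p.1 ≤ p.2), g p.1 p.2 =
      ∏ j ∈ range m, ∏ i ∈ range (j + 1), g i j := by
  rw [prod_filter, Fintype.prod_prod_type, prod_comm]
  simp only [Fin.le_iff_val_le_val]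
  rw [Fin.prod_univ_eq_prod_range (fun j => ∏ i : Fin m, if (i : ℕ) ≤ j then g i j else 1)]
  refine prod_congr rfl fun j hj => ?_
  rw [Fin.prod_univ_eq_prod_range (fun i => if i ≤ j then g i j else 1), ← prod_filter]
  congr 1
  ext i
  simp only [mem_filter, mem_range] at hj ⊢
  omega

theorem prod_one_sub_prod_Icc_eq_intervalFactorProd {R : Type*} [CommRing R] (m : ℕ)
    (z : Fin m → R) :
    ∏ p ∈ univ.filter (fun p : Fin m × Fin m => p.1 ≤ p.2), (1 - ∏ k ∈ Icc p.1 p.2, z k) =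
      intervalFactorProd m (extend Fin.val z 0) := by
  have hIcc : ∀ i j : Fin m,
      ∏ k ∈ Icc i j, z k = ∏ k ∈ Icc (i : ℕ) j, extend Fin.val z 0 k := by
    intro i j
    rw [← Fin.map_valEmbedding_Icc, prod_map]
    exact prod_congr rfl fun k _ => (Fin.val_injective.extend_apply z 0 k).symm
  simp only [hIcc]
  exact prod_filter_le_eq_prod_range m fun i j => 1 - ∏ k ∈ Icc i j, extend Fin.val z 0 k

theorem neg_one_pow_mul_prod_Icc {R : Type*} [CommRing R] {m : ℕ} (x : Fin m → R) {i j : Fin m}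
    (hij : i ≤ j) : (-1 : R) ^ ((j : ℕ) - i + 1) * ∏ k ∈ Icc i j, x k = ∏ k ∈ Icc i j, (-x) k := by
  rw [Fin.le_iff_val_le_val] at hij
  rw [Pi.neg_def, prod_neg, Fin.card_Icc, show (j : ℕ) + 1 - i = j - i + 1 by omega]

section SignedExtension

variable {m : ℕ} {ε x : Fin m → ℝ}

theorem abs_extend_mul_le_one (hε : ∀ i, ε i = -1 ∨ ε i = 1) (hx : ∀ i, x i ∈ Set.Icc (0 : ℝ) 1)
    (k : ℕ) : |extend Fin.val (ε * x) 0 k| ≤ 1 := by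
  by_cases hk : ∃ i : Fin m, (i : ℕ) = k
  · obtain ⟨i, rfl⟩ := hk
    rcases hε i with h | h <;> simp [Fin.val_injective.extend_apply, h, abs_le, (hx i).2] <;>
      linarith [(hx i).1]
  · simp [extend_apply' _ _ _ hk]

theorem neg_abs_extend_mul (hε : ∀ i, ε i = -1 ∨ ε i = 1) (hx : ∀ i, x i ∈ Set.Icc (0 : ℝ) 1) :
    -|extend Fin.val (ε * x) 0| = extend Fin.val (-x) 0 := by
  funext k
  by_cases hk : ∃ i : Fin m, (i : ℕ) = k
  · obtain ⟨i, rfl⟩ := hk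
    rcases hε i with h | h <;> simp [Fin.val_injective.extend_apply, h, abs_of_nonneg (hx i).1]
  · simp [extend_apply' _ _ _ hk]

end SignedExtension

end FinTransfer

theorem Qconf_le_Qconf_neg :
    ∀ n : ℕ, 2 ≤ n → ∀ ε : Fin (n - 1) → ℝ, (∀ i, ε i = -1 ∨ ε i = 1) →
      ∀ x : Fin (n - 1) → ℝ, (∀ i, x i ∈ Set.Icc (0 : ℝ) 1) →
        Qconf (n - 1) ε x ≤
          ∏ p ∈ Finset.univ.filter (fun p : Fin (n - 1) × Fin (n - 1) => p.1 ≤ p.2),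
            (1 - (-1 : ℝ) ^ ((p.2 : ℕ) - (p.1 : ℕ) + 1) *
              ∏ k ∈ Finset.Icc p.1 p.2, x k) := by
  intro n _ ε hε x hx
  have hlhs : Qconf (n - 1) ε x = intervalFactorProd (n - 1) (extend Fin.val (ε * x) 0) := by
    rw [← prod_one_sub_prod_Icc_eq_intervalFactorProd]
    simp only [Qconf, Pi.mul_apply, prod_mul_distrib]
  rw [hlhs]
  convert intervalFactorProd_le_neg_abs _ (abs_extend_mul_le_one hε hx) using 1
  rw [neg_abs_extend_mul hε hx, ← prod_one_sub_prod_Icc_eq_intervalFactorProd]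
  exact prod_congr rfl fun p hp => by rw [neg_one_pow_mul_prod_Icc x (mem_filter.1 hp).2]
end
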